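/- arXiv:2504.03054 — 2 statements merged into one kernel-verified Lean document; each statement's English description precedes it below -/
import Mathlib

section
/- Let σ < 0, δ < 0 with σ² + 4δ = 0, let A = [[σ, δ], [1, 0]], and let r = σ/2. Fix ρ ≥ 0 and let S₁ = {(x, y) ∈ Σ_ρ⁺ \ Σ_ρ : x > r·y}. Then for every q ∈ S₁: (i) exp(t·A)·q → (0,0) as t → +∞; and (ii) there exists t¹ < 0 such that exp(t¹·A)·q ∈ Σ_ρ. -/
/-!
Since `σ² + 4δ = 0`, `A = r • 1 + N` with `N ^ 2 = 0`, so
`exp (t • A) q = e^{rt} (q + t • N q)` and `N q = (q₀ - r q₁) • (r, 1)`.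
Because `r < 0` the exponential beats the linear growth, which gives (i). On `S₁` we have
`u = q₀ - r q₁ > 0`, so the second coordinate `e^{rt} (q₁ + t u)` is negative for very negative `t`;
as `h p ≤ p 1` when `ρ ≥ 0`, `h` changes sign along the backward orbit, and the intermediate value
theorem gives the crossing time `t₁ < 0`.
-/

open Matrix Filter Topology

theorem NormedSpace.exp_eq_one_add_of_sq_eq_zero {𝔸 : Type*} [Ring 𝔸] [Algebra ℚ 𝔸]
    [TopologicalSpace 𝔸] [IsTopologicalRing 𝔸] {x : 𝔸} (hx : x ^ 2 = 0) :
    NormedSpace.exp x = 1 + x := by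
  rw [NormedSpace.exp_eq_tsum_rat]
  beta_reduce
  rw [tsum_eq_sum (s := Finset.range 2)]
  · simp [Finset.sum_range_succ]
  · intro n hn
    simp [pow_eq_zero_of_le (by simpa [Nat.succ_le_iff] using hn) hx]

theorem Matrix.exp_smul_one {n : Type*} [Fintype n] [DecidableEq n] (c : ℝ) :
    NormedSpace.exp (c • (1 : Matrix n n ℝ)) = Real.exp c • 1 := by
  rw [smul_one_eq_diagonal, exp_diagonal, Pi.exp_def, ← smul_one_eq_diagonal, Real.exp_eq_exp_ℝ]

theorem Matrix.exp_smul_one_add_of_sq_eq_zero {n : Type*} [Fintype n] [DecidableEq n] (c : ℝ)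
    {X : Matrix n n ℝ} (hX : X ^ 2 = 0) :
    NormedSpace.exp (c • 1 + X) = Real.exp c • (1 + X) := by
  rw [exp_add_of_commute _ _ ((Commute.one_left X).smul_left c), exp_smul_one,
    NormedSpace.exp_eq_one_add_of_sq_eq_zero hX, smul_one_mul]

theorem tendsto_exp_mul_smul_add_smul {E : Type*} [AddCommGroup E] [Module ℝ E]
    [TopologicalSpace E] [ContinuousAdd E] [ContinuousSMul ℝ E] {r : ℝ} (hr : r < 0) (a b : E) :
    Tendsto (fun t : ℝ => Real.exp (r * t) • (a + t • b)) atTop (𝓝 0) := by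
  have h₁ : Tendsto (fun t : ℝ => Real.exp (r * t)) atTop (𝓝 0) :=
    Real.tendsto_exp_atBot.comp (tendsto_id.const_mul_atTop_of_neg hr)
  have h₂ : Tendsto (fun t : ℝ => Real.exp (r * t) * t) atTop (𝓝 0) := by
    simpa [mul_comm] using tendsto_rpow_mul_exp_neg_mul_atTop_nhds_zero 1 (-r) (by linarith)
  simpa [smul_add, smul_smul] using (h₁.smul_const a).add (h₂.smul_const b)

theorem node_matrix_eq_smul_one_add (r : ℝ) :
    !![2 * r, -r ^ 2; 1, 0] = r • 1 + !![r, -r ^ 2; 1, -r] := by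
  ext i j
  fin_cases i <;> fin_cases j <;> simp [two_mul]

theorem node_nilpotent_part_sq (r : ℝ) : !![r, -r ^ 2; 1, -r] ^ 2 = 0 := by
  rw [sq, mul_fin_two]
  ext i j
  fin_cases i <;> fin_cases j <;> simp <;> ring

theorem exp_smul_node_matrix_mulVec (r t : ℝ) (q : Fin 2 → ℝ) :
    NormedSpace.exp (t • !![2 * r, -r ^ 2; 1, 0]) *ᵥ q =
      Real.exp (r * t) • (q + t • ((q 0 - r * q 1) • ![r, 1])) := by
  have hsq : (t • !![r, -r ^ 2; 1, -r]) ^ 2 = 0 := by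
    rw [smul_pow, node_nilpotent_part_sq, smul_zero]
  rw [node_matrix_eq_smul_one_add, smul_add, smul_smul, mul_comm,
    exp_smul_one_add_of_sq_eq_zero _ hsq]
  ext i
  fin_cases i <;> simp [mulVec, dotProduct, Fin.sum_univ_two, vecHead, vecTail] <;> ring

theorem ite_nonpos_eq_sub_mul_max (x y ρ : ℝ) :
    (if x ≤ 0 then y else y - ρ * x) = y - ρ * max x 0 := by
  split_ifs with hx
  · simp [max_eq_right hx]
  · rw [max_eq_left (not_le.mp hx).le]

theorem stmt_7_general (σ δ ρ : ℝ) (hσ : σ < 0) (hdisc : σ ^ 2 + 4 * δ = 0)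
    (hρ : 0 ≤ ρ)
    (A : Matrix (Fin 2) (Fin 2) ℝ) (hA : A = !![σ, δ; 1, 0])
    (r : ℝ) (hr : r = σ / 2)
    (h : (Fin 2 → ℝ) → ℝ)
    (hh : ∀ p : Fin 2 → ℝ, h p = if p 0 ≤ 0 then p 1 else p 1 - ρ * p 0)
    (Sig SigPlus S₁ : Set (Fin 2 → ℝ))
    (hSig : Sig = {p | h p = 0}) (hSigPlus : SigPlus = {p | 0 ≤ h p})
    (hS₁ : S₁ = {p ∈ SigPlus \ Sig | p 0 > r * p 1}) :
    ∀ q ∈ S₁,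
      Filter.Tendsto (fun t : ℝ => (NormedSpace.exp (t • A)).mulVec q) Filter.atTop (nhds 0)
      ∧ ∃ t₁ : ℝ, t₁ < 0 ∧ (NormedSpace.exp (t₁ • A)).mulVec q ∈ Sig := by
  intro q hq
  obtain rfl : σ = 2 * r := by linarith
  obtain rfl : δ = -r ^ 2 := by nlinarith
  obtain rfl : h = fun p => p 1 - ρ * max (p 0) 0 :=
    funext fun p => (hh p).trans (ite_nonpos_eq_sub_mul_max _ _ _)
  subst hA hSig hSigPlus hS₁
  obtain ⟨⟨hq_nonneg, hq_ne⟩, hqx⟩ := hq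
  simp_rw [exp_smul_node_matrix_mulVec]
  refine ⟨tendsto_exp_mul_smul_add_smul (by linarith) _ _, ?_⟩
  set u := q 0 - r * q 1
  set φ : ℝ → ℝ := fun t => Real.exp (r * t) * (q 1 + t * u) -
    ρ * max (Real.exp (r * t) * (q 0 + t * (u * r))) 0 with hφ
  have hφ_cont : Continuous φ := by fun_prop
  have hφ_le : ∀ t, φ t ≤ Real.exp (r * t) * (q 1 + t * u) := fun t =>
    sub_le_self _ (mul_nonneg hρ (le_max_right _ _))
  obtain ⟨t₂, ht₂, ht₂_neg⟩ : ∃ t₂, q 1 + t₂ * u < 0 ∧ t₂ < 0 := by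
    have hu : 0 < u := by linarith
    exact ((tendsto_atBot_add_const_left _ (q 1) (tendsto_id.atBot_mul_const hu)).eventually
      (eventually_lt_atBot 0) |>.and (eventually_lt_atBot 0)).exists
  have hφ_zero : 0 < φ 0 := by simpa [hφ] using lt_of_le_of_ne hq_nonneg (Ne.symm hq_ne)
  obtain ⟨t₁, ⟨-, ht₁⟩, hφt₁⟩ := intermediate_value_Ioo ht₂_neg.le hφ_cont.continuousOn
    ⟨(hφ_le t₂).trans_lt (mul_neg_of_pos_of_neg (Real.exp_pos _) ht₂), hφ_zero⟩
  refine ⟨t₁, ht₁, ?_⟩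
  simpa [hφ, vecHead, vecTail] using hφt₁

theorem stmt_7 (σ δ ρ : ℝ) (hσ : σ < 0) (hδ : δ < 0) (hdisc : σ ^ 2 + 4 * δ = 0)
    (hρ : 0 ≤ ρ)
    (A : Matrix (Fin 2) (Fin 2) ℝ) (hA : A = !![σ, δ; 1, 0])
    (r : ℝ) (hr : r = σ / 2)
    (h : (Fin 2 → ℝ) → ℝ)
    (hh : ∀ p : Fin 2 → ℝ, h p = if p 0 ≤ 0 then p 1 else p 1 - ρ * p 0)
    (Sig SigPlus S₁ : Set (Fin 2 → ℝ))
    (hSig : Sig = {p | h p = 0}) (hSigPlus : SigPlus = {p | 0 ≤ h p})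
    (hS₁ : S₁ = {p ∈ SigPlus \ Sig | p 0 > r * p 1}) :
    ∀ q ∈ S₁,
      Filter.Tendsto (fun t : ℝ => (NormedSpace.exp (t • A)).mulVec q) Filter.atTop (nhds 0)
      ∧ ∃ t₁ : ℝ, t₁ < 0 ∧ (NormedSpace.exp (t₁ • A)).mulVec q ∈ Sig :=
  stmt_7_general σ δ ρ hσ hdisc hρ A hA r hr h hh Sig SigPlus S₁ hSig hSigPlus hS₁
end

section
/- Let σ < 0, δ < 0 with σ² + 4δ < 0 and let A = [[σ, δ], [1, 0]]. Fix ρ ≥ 0. Then for every q ∈ Σ_ρ⁺ \ Σ_ρ there exist times t¹ < 0 < t² such that exp(t¹·A)·q ∈ Σ_ρ and exp(t²·A)·q ∈ Σ_ρ. -/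
open Matrix

/-!
Write `A = (σ/2) • 1 + B` with `B * B = -μ² • 1`. Then
`exp (t • A) = e^{σt/2} • (cos (μt) • 1 + (sin (μt) / μ) • B)`, so at `t = ±π/μ` the flow is a
negative multiple of the identity; it maps `q` with `h q > 0` to a point with `h < 0`, and the
intermediate value theorem along the orbit gives the two crossings of `Σ_ρ`.
-/

theorem NormedSpace.exp_smul_one_add_smul_of_mul_self_eq_neg_one {𝔸 : Type*} [NormedRing 𝔸]
    [NormedAlgebra ℝ 𝔸] [Algebra ℚ 𝔸] {J : 𝔸} (hJ : J * J = -1) (x y : ℝ) :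
    NormedSpace.exp (x • (1 : 𝔸) + y • J) =
      Real.exp x • (Real.cos y • (1 : 𝔸) + Real.sin y • J) := by
  -- `1` and `J` span a copy of `ℂ`, and `exp` commutes with the continuous embedding.
  let f := Complex.liftAux J hJ
  have hf : ∀ z : ℂ, f z = z.re • (1 : 𝔸) + z.im • J := fun z => by
    rw [Complex.liftAux_apply, Algebra.algebraMap_eq_smul_one]
  have hfc : Continuous f := f.toLinearMap.continuous_of_finiteDimensional
  have := NormedSpace.map_exp f hfc ⟨x, y⟩
  rw [hf, ← Complex.exp_eq_exp_ℂ, hf, Complex.exp_re, Complex.exp_im] at this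
  rw [← this, smul_add, smul_smul, smul_smul]

theorem NormedSpace.exp_smul_of_mul_self_sub_smul_one {𝔸 : Type*} [NormedRing 𝔸]
    [NormedAlgebra ℝ 𝔸] [Algebra ℚ 𝔸] {a : 𝔸} {l μ : ℝ} (hμ : μ ≠ 0)
    (ha : (a - l • 1) * (a - l • 1) = -μ ^ 2 • 1) (t : ℝ) :
    NormedSpace.exp (t • a) =
      Real.exp (l * t) • (Real.cos (μ * t) • 1 + (Real.sin (μ * t) / μ) • (a - l • 1)) := by
  set J := μ⁻¹ • (a - l • 1)
  have hJ : J * J = -1 := by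
    rw [smul_mul_smul_comm, ha, smul_smul]
    field_simp
    simp
  have hta : t • a = (l * t) • (1 : 𝔸) + (μ * t) • J := by
    simp only [J, smul_smul]
    field_simp
    module
  rw [hta, exp_smul_one_add_smul_of_mul_self_eq_neg_one hJ, smul_smul]
  simp only [div_eq_mul_inv]

theorem Matrix.exp_smul_of_mul_self_sub_smul_one {n : Type*} [Fintype n] [DecidableEq n]
    {A : Matrix n n ℝ} {l μ : ℝ} (hμ : μ ≠ 0)
    (hA : (A - l • 1) * (A - l • 1) = -μ ^ 2 • 1) (t : ℝ) :
    NormedSpace.exp (t • A) =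
      Real.exp (l * t) • (Real.cos (μ * t) • 1 + (Real.sin (μ * t) / μ) • (A - l • 1)) := by
  let : NormedRing (Matrix n n ℝ) := Matrix.linftyOpNormedRing
  let : NormedAlgebra ℝ (Matrix n n ℝ) := Matrix.linftyOpNormedAlgebra
  exact NormedSpace.exp_smul_of_mul_self_sub_smul_one hμ hA t

theorem Matrix.mul_self_sub_half_trace_smul_one {K : Type*} [Field K] [NeZero (2 : K)]
    (A : Matrix (Fin 2) (Fin 2) K) :
    (A - (A.trace / 2) • 1) * (A - (A.trace / 2) • 1) = (A.trace ^ 2 / 4 - A.det) • 1 := by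
  have h2 : (2 : K) ≠ 0 := NeZero.ne 2
  have h4 : (4 : K) ≠ 0 := by simpa [show (4 : K) = 2 * 2 by norm_num] using mul_ne_zero h2 h2
  ext i j
  fin_cases i <;> fin_cases j <;>
    simp [Matrix.mul_apply, Matrix.trace_fin_two, Matrix.det_fin_two] <;> field_simp <;> ring

def switchingFunction (ρ : ℝ) (p : Fin 2 → ℝ) : ℝ := p 1 - ρ * max (p 0) 0

theorem switchingFunction_eq_ite (ρ : ℝ) (p : Fin 2 → ℝ) :
    switchingFunction ρ p = if p 0 ≤ 0 then p 1 else p 1 - ρ * p 0 := by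
  split_ifs with hp
  · simp [switchingFunction, max_eq_right hp]
  · simp [switchingFunction, max_eq_left (not_le.mp hp).le]

theorem continuous_switchingFunction (ρ : ℝ) : Continuous (switchingFunction ρ) := by
  unfold switchingFunction
  fun_prop

theorem switchingFunction_neg_smul_neg {ρ c : ℝ} (hρ : 0 ≤ ρ) (hc : 0 < c) {q : Fin 2 → ℝ}
    (hq : 0 < switchingFunction ρ q) : switchingFunction ρ (-c • q) < 0 := by
  have hq1 : 0 < q 1 := by
    unfold switchingFunction at hq
    nlinarith [mul_nonneg hρ (le_max_right (q 0) 0)]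
  have := mul_nonneg hρ (le_max_right (-c * q 0) 0)
  simp only [switchingFunction, Pi.smul_apply, smul_eq_mul]
  nlinarith

theorem exists_neg_zero_and_pos_zero {F : ℝ → ℝ} (hF : Continuous F) {T : ℝ} (hT : 0 < T)
    (h0 : 0 < F 0) (hneg : F (-T) < 0) (hpos : F T < 0) :
    ∃ t₁ t₂ : ℝ, t₁ < 0 ∧ 0 < t₂ ∧ F t₁ = 0 ∧ F t₂ = 0 := by
  obtain ⟨t₁, ⟨-, ht₁⟩, hF₁⟩ :=
    intermediate_value_Ioo (neg_nonpos.mpr hT.le) hF.continuousOn ⟨hneg, h0⟩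
  obtain ⟨t₂, ⟨ht₂, -⟩, hF₂⟩ := intermediate_value_Ioo' hT.le hF.continuousOn ⟨hpos, h0⟩
  exact ⟨t₁, t₂, ht₁, ht₂, hF₁, hF₂⟩

theorem stmt_9_general (σ δ ρ : ℝ) (hdisc : σ ^ 2 + 4 * δ < 0)
    (hρ : 0 ≤ ρ)
    (A : Matrix (Fin 2) (Fin 2) ℝ) (hA : A = !![σ, δ; 1, 0])
    (h : (Fin 2 → ℝ) → ℝ)
    (hh : ∀ p : Fin 2 → ℝ, h p = if p 0 ≤ 0 then p 1 else p 1 - ρ * p 0)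
    (Sig SigPlus : Set (Fin 2 → ℝ))
    (hSig : Sig = {p | h p = 0}) (hSigPlus : SigPlus = {p | 0 ≤ h p}) :
    ∀ q ∈ SigPlus \ Sig, ∃ t₁ t₂ : ℝ, t₁ < 0 ∧ 0 < t₂ ∧
      (NormedSpace.exp (t₁ • A)).mulVec q ∈ Sig ∧
      (NormedSpace.exp (t₂ • A)).mulVec q ∈ Sig := by
  obtain rfl : h = switchingFunction ρ :=
    funext fun p => (hh p).trans (switchingFunction_eq_ite ρ p).symm
  rintro q ⟨hq, hqSig⟩
  subst hSig hSigPlus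
  have hq : 0 < switchingFunction ρ q := lt_of_le_of_ne hq (Ne.symm hqSig)
  set μ := Real.sqrt (-(σ ^ 2 + 4 * δ)) / 2
  have hneg_disc : 0 < -(σ ^ 2 + 4 * δ) := by linarith
  have hμ : 0 < μ := by positivity
  have hA2 : (A - (σ / 2) • 1) * (A - (σ / 2) • 1) = -μ ^ 2 • 1 := by
    have htr : A.trace = σ := by simp [hA, trace_fin_two]
    have hdet : A.det = -δ := by simp [hA, det_fin_two]
    rw [← htr, A.mul_self_sub_half_trace_smul_one, htr, hdet, div_pow, Real.sq_sqrt hneg_disc.le]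
    congr 1
    ring
  have hexp := Matrix.exp_smul_of_mul_self_sub_smul_one hμ.ne' hA2
  have hcont :
      Continuous fun t : ℝ => switchingFunction ρ ((NormedSpace.exp (t • A)).mulVec q) := by
    simp only [hexp]
    exact (continuous_switchingFunction ρ).comp (by fun_prop)
  have h_half_period : ∀ t : ℝ, μ * t = Real.pi ∨ μ * t = -Real.pi →
      switchingFunction ρ ((NormedSpace.exp (t • A)).mulVec q) < 0 := by
    intro t ht
    have : NormedSpace.exp (t • A) = -Real.exp (σ / 2 * t) • 1 := by
      rcases ht with ht | ht <;> simp [hexp, ht]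
    rw [this, smul_mulVec, one_mulVec]
    exact switchingFunction_neg_smul_neg hρ (Real.exp_pos _) hq
  refine exists_neg_zero_and_pos_zero hcont (T := Real.pi / μ) (by positivity) (by simpa using hq)
    (h_half_period _ (Or.inr ?_)) (h_half_period _ (Or.inl ?_)) <;> field_simp

theorem stmt_9 (σ δ ρ : ℝ) (hσ : σ < 0) (hδ : δ < 0) (hdisc : σ ^ 2 + 4 * δ < 0)
    (hρ : 0 ≤ ρ)
    (A : Matrix (Fin 2) (Fin 2) ℝ) (hA : A = !![σ, δ; 1, 0])
    (h : (Fin 2 → ℝ) → ℝ)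
    (hh : ∀ p : Fin 2 → ℝ, h p = if p 0 ≤ 0 then p 1 else p 1 - ρ * p 0)
    (Sig SigPlus : Set (Fin 2 → ℝ))
    (hSig : Sig = {p | h p = 0}) (hSigPlus : SigPlus = {p | 0 ≤ h p}) :
    ∀ q ∈ SigPlus \ Sig, ∃ t₁ t₂ : ℝ, t₁ < 0 ∧ 0 < t₂ ∧
      (NormedSpace.exp (t₁ • A)).mulVec q ∈ Sig ∧
      (NormedSpace.exp (t₂ • A)).mulVec q ∈ Sig :=
  stmt_9_general σ δ ρ hdisc hρ A hA h hh Sig SigPlus hSig hSigPlus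
end
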